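/- arXiv:1608.08665 — 2 statements merged into one kernel-verified Lean document; each statement's English description precedes it below -/
import Mathlib

section
/- Let U be a real Hilbert space, C ⊆ U nonempty closed convex, α > 0, and g : U → U monotone (⟨g(u)-g(w), u-w⟩ ≥ 0 for all u, w ∈ U). If ū ∈ C satisfies ⟨α ū + g(ū), v - ū⟩ ≥ 0 for all v ∈ C, and u_p ∈ C and ζ ∈ U satisfy ⟨α u_p + g(u_p) + ζ, v - u_p⟩ ≥ 0 for all v ∈ C, then ‖ū - u_p‖ ≤ (1/α)‖ζ‖. -/
open scoped RealInnerProductSpace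

/-- Abstract Tröltzsch–Volkwein a-posteriori error estimate:
`‖ū - u_p‖ ≤ (1/α) ‖ζ‖`. -/
theorem aposteriori_control_estimate
    {U : Type*} [NormedAddCommGroup U] [InnerProductSpace ℝ U] [CompleteSpace U]
    (C : Set U) (hC : C.Nonempty) (hclosed : IsClosed C) (hconv : Convex ℝ C)
    (α : ℝ) (hα : 0 < α) (g : U → U)
    (hmono : ∀ u w : U, 0 ≤ ⟪g u - g w, u - w⟫)
    (ubar : U) (hubar : ubar ∈ C)
    (hVI : ∀ v ∈ C, 0 ≤ ⟪α • ubar + g ubar, v - ubar⟫)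
    (up : U) (hup : up ∈ C) (ζ : U)
    (hVIp : ∀ v ∈ C, 0 ≤ ⟪α • up + g up + ζ, v - up⟫) :
    ‖ubar - up‖ ≤ (1/α) * ‖ζ‖ := by
  set d := ubar - up with hd
  have h1 := hVI up hup
  have h2 := hVIp ubar hubar
  have hm := hmono ubar up
  have key : α * ‖d‖ ^ 2 ≤ ⟪ζ, d⟫ := by
    have hsum : 0 ≤ ⟪α • ubar + g ubar, up - ubar⟫ + ⟪α • up + g up + ζ, ubar - up⟫ :=
      add_nonneg h1 h2
    have hexp : ⟪α • ubar + g ubar, up - ubar⟫ + ⟪α • up + g up + ζ, ubar - up⟫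
        = -(α * ⟪d, d⟫) - ⟪g ubar - g up, d⟫ + ⟪ζ, d⟫ := by
      simp only [hd, inner_add_left, inner_sub_left, inner_sub_right, inner_smul_left,
        real_inner_smul_left, RCLike.ofReal_real_eq_id, conj_trivial]
      ring
    rw [hexp] at hsum
    rw [← real_inner_self_eq_norm_sq]
    linarith
  have hz : ⟪ζ, d⟫ ≤ ‖ζ‖ * ‖d‖ := real_inner_le_norm ζ d
  rcases eq_or_ne (‖d‖) 0 with h0 | h0
  · rw [h0]; positivity
  · have hdpos : 0 < ‖d‖ := lt_of_le_of_ne (norm_nonneg _) (Ne.symm h0)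
    rw [div_mul_eq_mul_div, le_div_iff₀ hα]
    nlinarith [key, hz]
end

section
/- Let V be a real Hilbert space, z : [0,T] → V continuous with correlation operator R ψ = ∫₀ᵀ ⟨z(t), ψ⟩ z(t) dt. Suppose {ψᵢ}_{i∈I} is a complete orthonormal system of eigenvectors of R with eigenvalues {λᵢ}. Then ∫₀ᵀ ‖z(t) - Σ_{i=1}^{ℓ} ⟨z(t), ψᵢ⟩ψᵢ‖² dt = Σ_{i>ℓ} λᵢ, where the eigenvalues are ordered decreasingly. -/
open scoped RealInnerProductSpace
open MeasureTheory

/-!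
Expanding `z t` in the Hilbert basis `ψ`, Parseval's identity turns the squared projection error
into the tail `∑_{i ≥ ℓ} ⟪z t, ψ i⟫²`. Each term of the tail integrates to `λᵢ`, because
`λᵢ = ⟪ψ i, R (ψ i)⟫ = ∫ ⟪z t, ψ i⟫² dt`, and the sum may be taken out of the integral since
its terms are nonnegative (monotone convergence).
-/

theorem Orthonormal.norm_sub_sum_inner_smul_sq {ι V : Type*} [NormedAddCommGroup V]
    [InnerProductSpace ℝ V] {v : ι → V} (hv : Orthonormal ℝ v) (x : V) (s : Finset ι) :
    ‖x - ∑ i ∈ s, ⟪x, v i⟫ • v i‖ ^ 2 = ‖x‖ ^ 2 - ∑ i ∈ s, ⟪x, v i⟫ ^ 2 := by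
  have h_inner : ⟪x, ∑ i ∈ s, ⟪x, v i⟫ • v i⟫ = ∑ i ∈ s, ⟪x, v i⟫ ^ 2 := by
    simp only [inner_sum, real_inner_smul_right, sq]
  have h_norm : ‖∑ i ∈ s, ⟪x, v i⟫ • v i‖ ^ 2 = ∑ i ∈ s, ⟪x, v i⟫ ^ 2 := by
    rw [← real_inner_self_eq_norm_sq, hv.inner_sum]
    simp only [conj_trivial, sq]
  rw [norm_sub_sq_real, h_inner, h_norm]
  ring

theorem HilbertBasis.hasSum_inner_sq {ι V : Type*} [NormedAddCommGroup V]
    [InnerProductSpace ℝ V] (b : HilbertBasis ι ℝ V) (x : V) :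
    HasSum (fun i => ⟪x, b i⟫ ^ 2) (‖x‖ ^ 2) := by
  simpa only [sq, real_inner_comm x, real_inner_self_eq_norm_sq] using b.hasSum_inner_mul_inner x x

theorem HilbertBasis.norm_sub_sum_range_inner_smul_sq {V : Type*} [NormedAddCommGroup V]
    [InnerProductSpace ℝ V] (b : HilbertBasis ℕ ℝ V) (x : V) (ℓ : ℕ) :
    ‖x - ∑ i ∈ Finset.range ℓ, ⟪x, b i⟫ • b i‖ ^ 2 = ∑' i, ⟪x, b (ℓ + i)⟫ ^ 2 := by
  have h_split := (b.hasSum_inner_sq x).summable.sum_add_tsum_nat_add ℓ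
  rw [b.orthonormal.norm_sub_sum_inner_smul_sq, ← (b.hasSum_inner_sq x).tsum_eq, ← h_split]
  simp only [add_comm ℓ, add_sub_cancel_left]

/-- No summability of the integrals is assumed: when it fails, both sides are the junk value `0`. -/
theorem integral_tsum_of_nonneg {α ι : Type*} [MeasurableSpace α] [Countable ι] {μ : Measure α}
    {g : ι → α → ℝ} (hg : ∀ i, Integrable (g i) μ) (hg_nonneg : ∀ i x, 0 ≤ g i x)
    (hg_sum : ∀ x, Summable fun i => g i x) :
    ∫ x, ∑' i, g i x ∂μ = ∑' i, ∫ x, g i x ∂μ := by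
  have h_ofReal : ∀ x, ENNReal.ofReal (∑' i, g i x) = ∑' i, ENNReal.ofReal (g i x) :=
    fun x => ENNReal.ofReal_tsum_of_nonneg (hg_nonneg · x) (hg_sum x)
  have h_meas : AEStronglyMeasurable (fun x => ∑' i, g i x) μ :=
    (AEMeasurable.tsum fun i => (hg i).aemeasurable).aestronglyMeasurable
  have h_term : ∀ i, ∫ x, g i x ∂μ = (∫⁻ x, ENNReal.ofReal (g i x) ∂μ).toReal := fun i =>
    integral_eq_lintegral_of_nonneg_ae (ae_of_all _ (hg_nonneg i)) (hg i).aestronglyMeasurable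
  have h_finite : ∀ i, ∫⁻ x, ENNReal.ofReal (g i x) ∂μ ≠ ⊤ := fun i =>
    (lintegral_ofReal_ne_top_iff_integrable (hg i).aestronglyMeasurable
      (ae_of_all _ (hg_nonneg i))).2 (hg i)
  rw [integral_eq_lintegral_of_nonneg_ae (ae_of_all _ fun x => tsum_nonneg (hg_nonneg · x)) h_meas]
  simp only [h_ofReal, h_term]
  rw [lintegral_tsum fun i => (hg i).aemeasurable.ennreal_ofReal, ENNReal.tsum_toReal_eq h_finite]

theorem intervalIntegral.integral_tsum_of_nonneg {ι : Type*} [Countable ι] {g : ι → ℝ → ℝ}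
    {a b : ℝ} (hg : ∀ i, IntervalIntegrable (g i) volume a b) (hg_nonneg : ∀ i x, 0 ≤ g i x)
    (hg_sum : ∀ x, Summable fun i => g i x) :
    ∫ x in a..b, ∑' i, g i x = ∑' i, ∫ x in a..b, g i x := by
  rcases le_total a b with hab | hab
  · simp only [intervalIntegral.integral_of_le hab]
    exact _root_.integral_tsum_of_nonneg (fun i => (hg i).1) hg_nonneg hg_sum
  · simp only [intervalIntegral.integral_of_ge hab, tsum_neg]
    rw [_root_.integral_tsum_of_nonneg (fun i => (hg i).2) hg_nonneg hg_sum]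

theorem inner_integral_inner_smul_self {V : Type*} [NormedAddCommGroup V] [InnerProductSpace ℝ V]
    [CompleteSpace V] {z : ℝ → V} (hz : Continuous z) (a b : ℝ) (v : V) :
    ⟪v, ∫ t in a..b, ⟪z t, v⟫ • z t⟫ = ∫ t in a..b, ⟪z t, v⟫ ^ 2 := by
  have h_int : IntervalIntegrable (fun t => ⟪z t, v⟫ • z t) volume a b :=
    ((hz.inner continuous_const).smul hz).intervalIntegrable a b
  rw [← innerSL_apply_apply ℝ, ← (innerSL ℝ v).intervalIntegral_comp_comm h_int]
  simp only [innerSL_apply_apply, real_inner_smul_right, real_inner_comm v, sq]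

theorem pod_error_eq_neglected_eigenvalues_general
    {V : Type*} [NormedAddCommGroup V] [InnerProductSpace ℝ V] [CompleteSpace V]
    (T : ℝ) (z : ℝ → V) (hz : Continuous z)
    (R : V → V)
    (hR : ∀ ψ : V, R ψ = ∫ t in (0:ℝ)..T, ⟪z t, ψ⟫ • z t)
    (ψ : ℕ → V) (hortho : Orthonormal ℝ ψ)
    (hcomplete : (Submodule.span ℝ (Set.range ψ)).topologicalClosure = ⊤)
    (lam : ℕ → ℝ) (heig : ∀ i, R (ψ i) = lam i • ψ i)
    (ℓ : ℕ) :
    ∫ t in (0:ℝ)..T, ‖z t - ∑ i ∈ Finset.range ℓ, ⟪z t, ψ i⟫ • ψ i‖ ^ 2 =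
      ∑' i : ℕ, lam (ℓ + i) := by
  let b : HilbertBasis ℕ ℝ V := HilbertBasis.mk hortho hcomplete.ge
  have hb : ⇑b = ψ := HilbertBasis.coe_mk _ _
  have h_eigenvalue : ∀ i, lam i = ∫ t in (0:ℝ)..T, ⟪z t, ψ i⟫ ^ 2 := fun i => by
    rw [← inner_integral_inner_smul_self hz, ← hR, heig, real_inner_smul_right,
      real_inner_self_eq_norm_sq, hortho.1 i, one_pow, mul_one]
  calc ∫ t in (0:ℝ)..T, ‖z t - ∑ i ∈ Finset.range ℓ, ⟪z t, ψ i⟫ • ψ i‖ ^ 2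
      = ∫ t in (0:ℝ)..T, ∑' i, ⟪z t, ψ (ℓ + i)⟫ ^ 2 := by
        simp only [← hb, b.norm_sub_sum_range_inner_smul_sq]
    _ = ∑' i, ∫ t in (0:ℝ)..T, ⟪z t, ψ (ℓ + i)⟫ ^ 2 :=
        intervalIntegral.integral_tsum_of_nonneg
          (fun i => ((hz.inner continuous_const).pow 2).intervalIntegrable 0 T)
          (fun i t => sq_nonneg _)
          (fun t => hb ▸ (b.hasSum_inner_sq (z t)).summable.comp_injective (add_right_injective ℓ))
    _ = ∑' i, lam (ℓ + i) := by simp only [h_eigenvalue]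

/-- POD error formula: the approximation error equals the sum of the neglected
eigenvalues of the correlation operator. -/
theorem pod_error_eq_neglected_eigenvalues
    {V : Type*} [NormedAddCommGroup V] [InnerProductSpace ℝ V] [CompleteSpace V]
    (T : ℝ) (hT : 0 ≤ T) (z : ℝ → V) (hz : Continuous z)
    (R : V → V)
    (hR : ∀ ψ : V, R ψ = ∫ t in (0:ℝ)..T, ⟪z t, ψ⟫ • z t)
    (ψ : ℕ → V) (hortho : Orthonormal ℝ ψ)
    (hcomplete : (Submodule.span ℝ (Set.range ψ)).topologicalClosure = ⊤)
    (lam : ℕ → ℝ) (heig : ∀ i, R (ψ i) = lam i • ψ i)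
    (hnonneg : ∀ i, 0 ≤ lam i) (hdecr : Antitone lam)
    (ℓ : ℕ) :
    ∫ t in (0:ℝ)..T, ‖z t - ∑ i ∈ Finset.range ℓ, ⟪z t, ψ i⟫ • ψ i‖ ^ 2 =
      ∑' i : ℕ, lam (ℓ + i) :=
  pod_error_eq_neglected_eigenvalues_general T z hz R hR ψ hortho hcomplete lam heig ℓ
end
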